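/- arXiv:2005.12122 — 2 statements merged into one kernel-verified Lean document; each statement's English description precedes it below -/
import Mathlib

section
/- Let G be a connected graph and P, P' distinguishable regular bounded profiles in G. For every infinite increasing sequence (A_1,B_1) ≤ (A_2,B_2) ≤ … of separations each of which distinguishes P and P' efficiently, the sequence of separators (A_i ∩ B_i)_{i∈ℕ} is eventually constant. -/
/-- A separation of a graph `G`: a pair of vertex sets covering `V` with no edge
between `A ∖ B` and `B ∖ A`. -/
structure GraphSep {V : Type} (G : SimpleGraph V) where
  A : Set V
  B : Set V
  union_eq : A ∪ B = Set.univ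
  no_edge : ∀ a ∈ A \ B, ∀ b ∈ B \ A, ¬ G.Adj a b

namespace GraphSep

variable {V V' : Type} {G : SimpleGraph V} {G' : SimpleGraph V'}

/-- The inverse `(B,A)` of a separation `(A,B)`. -/
def inv (s : GraphSep G) : GraphSep G where
  A := s.B
  B := s.A
  union_eq := by rw [Set.union_comm]; exact s.union_eq
  no_edge := fun a ha b hb h => s.no_edge b hb a ha h.symm

/-- The separator `A ∩ B`. -/
def sepSet (s : GraphSep G) : Set V := s.A ∩ s.B

/-- The order `|A ∩ B|` of a separation, as an extended natural number. -/
noncomputable def order (s : GraphSep G) : ℕ∞ := (s.A ∩ s.B).encard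

/-- `(A,B) ≤ (C,D)` iff `A ⊆ C` and `D ⊆ B`. -/
protected def le (s t : GraphSep G) : Prop := s.A ⊆ t.A ∧ t.B ⊆ s.B

/-- Two separations are nested if after possibly replacing either by its inverse
they are `≤`-comparable. -/
def Nested (s t : GraphSep G) : Prop :=
  s.le t ∨ s.le t.inv ∨ s.inv.le t ∨ s.inv.le t.inv

lemma mem_A_or_B (s : GraphSep G) (x : V) : x ∈ s.A ∨ x ∈ s.B := by
  have h : x ∈ s.A ∪ s.B := by rw [s.union_eq]; exact Set.mem_univ x
  exact (Set.mem_union _ _ _).1 h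

/-- The join `(A,B) ∨ (C,D) = (A ∪ C, B ∩ D)`. -/
def join (s t : GraphSep G) : GraphSep G where
  A := s.A ∪ t.A
  B := s.B ∩ t.B
  union_eq := by
    apply Set.eq_univ_of_forall
    intro x
    rcases s.mem_A_or_B x with h1 | h1
    · exact Or.inl (Or.inl h1)
    · rcases t.mem_A_or_B x with h2 | h2
      · exact Or.inl (Or.inr h2)
      · exact Or.inr ⟨h1, h2⟩
  no_edge := by
    rintro a ⟨haA, haB⟩ b ⟨hbB, hbA⟩ hadj
    by_cases hsB : a ∈ s.B
    · have hatB : a ∉ t.B := fun h => haB ⟨hsB, h⟩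
      have hatA : a ∈ t.A := (t.mem_A_or_B a).resolve_right hatB
      exact t.no_edge a ⟨hatA, hatB⟩ b ⟨hbB.2, fun h => hbA (Or.inr h)⟩ hadj
    · have hasA : a ∈ s.A := (s.mem_A_or_B a).resolve_right hsB
      exact s.no_edge a ⟨hasA, hsB⟩ b ⟨hbB.1, fun h => hbA (Or.inl h)⟩ hadj

/-- The image of a separation under a graph isomorphism. -/
def map (φ : G ≃g G') (s : GraphSep G) : GraphSep G' where
  A := ⇑φ '' s.A
  B := ⇑φ '' s.B
  union_eq := by
    apply Set.eq_univ_of_forall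
    intro y
    rcases s.mem_A_or_B (φ.symm y) with h | h
    · exact Or.inl ⟨φ.symm y, h, φ.apply_symm_apply y⟩
    · exact Or.inr ⟨φ.symm y, h, φ.apply_symm_apply y⟩
  no_edge := by
    rintro a ⟨⟨x, hxA, rfl⟩, haB⟩ b ⟨⟨y, hyB, rfl⟩, hbA⟩ hadj
    exact s.no_edge x ⟨hxA, fun h => haB ⟨x, h, rfl⟩⟩ y ⟨hyB, fun h => hbA ⟨y, h, rfl⟩⟩
      (φ.map_adj_iff.mp hadj)

/-- The neighbourhood of a set of vertices. -/
def nbhd (G : SimpleGraph V) (X : Set V) : Set V := {v | v ∉ X ∧ ∃ x ∈ X, G.Adj v x}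

/-- `w` can be reached from `v` by a walk avoiding `X`. -/
def AvoidReach (G : SimpleGraph V) (X : Set V) (v w : V) : Prop :=
  ∃ p : G.Walk v w, ∀ u ∈ p.support, u ∉ X

/-- `C` is a (connected) component of `G − X`. -/
def IsCompOf (G : SimpleGraph V) (X C : Set V) : Prop :=
  ∃ v, v ∉ X ∧ C = {w | AvoidReach G X v w}

/-- A separation `(A,B)` is tight if each of `A ∖ B` and `B ∖ A` contains a component
of `G − (A ∩ B)` whose neighbourhood is all of `A ∩ B`. -/
def IsTight (s : GraphSep G) : Prop :=
  (∃ C, IsCompOf G s.sepSet C ∧ nbhd G C = s.sepSet ∧ C ⊆ s.A \ s.B) ∧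
  (∃ C, IsCompOf G s.sepSet C ∧ nbhd G C = s.sepSet ∧ C ⊆ s.B \ s.A)

/-- An orientation of `S_k`: it contains only separations of order `< k`, contains
at least one of `s, s⁻¹` for every separation of order `< k`, and contains both only
if they coincide. -/
def IsOrientation (k : ℕ∞) (P : Set (GraphSep G)) : Prop :=
  (∀ s ∈ P, s.order < k) ∧
  (∀ s : GraphSep G, s.order < k → (s ∈ P ∨ s.inv ∈ P)) ∧
  (∀ s ∈ P, s.inv ∈ P → s.inv = s)

/-- Consistency: no two members `r, s` with distinct underlying separations satisfy
`r⁻¹ ≤ s`. -/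
def Consistent (P : Set (GraphSep G)) : Prop :=
  ∀ r ∈ P, ∀ s ∈ P, r.inv.le s → r = s ∨ r = s.inv

/-- A `k`-profile: a consistent orientation of `S_k` satisfying the profile property. -/
def IsProfile (k : ℕ∞) (P : Set (GraphSep G)) : Prop :=
  IsOrientation k P ∧ Consistent P ∧ ∀ s ∈ P, ∀ t ∈ P, (s.join t).inv ∉ P

/-- A profile in `G` is a `k`-profile for some `k ∈ ℕ ∪ {ℵ₀}`. -/
def IsProfileIn (G : SimpleGraph V) (P : Set (GraphSep G)) : Prop := ∃ k : ℕ∞, IsProfile k P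

/-- A profile is regular if it contains no separation of the form `(V, X)`. -/
def RegularP (P : Set (GraphSep G)) : Prop := ∀ s ∈ P, s.A ≠ Set.univ

/-- A profile is bounded if it is a `k`-profile for some finite `k` and is not a subset
of any `ℵ₀`-profile. -/
def BoundedP (P : Set (GraphSep G)) : Prop :=
  (∃ k : ℕ, IsProfile (k : ℕ∞) P) ∧ ∀ Q : Set (GraphSep G), IsProfile ⊤ Q → ¬ P ⊆ Q

/-- `s` distinguishes the profiles `P` and `P'`. -/
def Distinguishes (s : GraphSep G) (P P' : Set (GraphSep G)) : Prop :=
  (s ∈ P ∧ s.inv ∈ P') ∨ (s.inv ∈ P ∧ s ∈ P')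

/-- `s` distinguishes `P` and `P'` efficiently: it has minimum order among all
separations distinguishing `P` and `P'`. -/
def EffDist (s : GraphSep G) (P P' : Set (GraphSep G)) : Prop :=
  Distinguishes s P P' ∧ ∀ t : GraphSep G, Distinguishes t P P' → s.order ≤ t.order

/-- `P` and `P'` are distinguishable: some finite-order separation distinguishes them. -/
def Distinguishable (P P' : Set (GraphSep G)) : Prop :=
  ∃ s : GraphSep G, s.order < ⊤ ∧ Distinguishes s P P'

/-- Robustness of a profile. -/
def RobustP (P : Set (GraphSep G)) : Prop :=
  ∀ s ∈ P, ∀ t : GraphSep G, t.order < ⊤ →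
    (s.join t).order < s.order → (s.join t.inv).order < s.order →
    (s.join t ∈ P ∨ s.join t.inv ∈ P)

/-- A `k`-profile is principal if for every vertex set `X` with `|X| < k` it contains
`(V ∖ C, C ∪ X)` for some component `C` of `G − X`. -/
def PrincipalP (k : ℕ∞) (P : Set (GraphSep G)) : Prop :=
  ∀ X : Set V, X.encard < k →
    ∃ C, IsCompOf G X C ∧ ∃ s ∈ P, s.A = Cᶜ ∧ s.B = C ∪ X

/-- `c` is a corner separation of `s` and `t`. -/
def IsCornerSep (s t c : GraphSep G) : Prop :=
  ∃ s' ∈ ({s, s.inv} : Set (GraphSep G)), ∃ t' ∈ ({t, t.inv} : Set (GraphSep G)),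
    c = s'.join t' ∨ c = (s'.join t').inv

/-- The set `S ⊆ V ∖ {x,y}` separates `x` from `y` in `G`. -/
def SeparatesIn (G : SimpleGraph V) (x y : V) (S : Set V) : Prop :=
  x ∉ S ∧ y ∉ S ∧ ∀ p : G.Walk x y, ∃ u ∈ p.support, u ∈ S

/-- `S` is a `⊆`-minimal `x`–`y`-separator in `G`. -/
def MinSeparator (G : SimpleGraph V) (x y : V) (S : Set V) : Prop :=
  SeparatesIn G x y S ∧ ∀ S' ⊆ S, SeparatesIn G x y S' → S' = S

/-- The separation of `G` induced by an (oriented) edge of a tree-decomposition. -/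
def InducedSep {ι : Type} (T : SimpleGraph ι) (𝒱 : ι → Set V) (x : GraphSep G) : Prop :=
  ∃ t t' : ι, T.Adj t t' ∧
    x.A = (⋃ u ∈ {u : ι | ∃ p : T.Walk u t, Sym2.mk t t' ∉ p.edges}, 𝒱 u) ∧
    x.B = (⋃ u ∈ {u : ι | ∃ p : T.Walk u t', Sym2.mk t t' ∉ p.edges}, 𝒱 u)

/-- Opposite pairs of corner separations of `s` and `t`. -/
def OppPair (s t c d : GraphSep G) : Prop :=
  (c = s.join t ∧ d = s.inv.join t.inv) ∨ (c = s.inv.join t.inv ∧ d = s.join t) ∨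
  (c = s.join t.inv ∧ d = s.inv.join t) ∨ (c = s.inv.join t ∧ d = s.join t.inv)

end GraphSep

/-! By consistency and regularity the chain is eventually oriented one way, say `fₙ ∈ P` and
`fₙ⁻¹ ∈ P'`. Let `s = (⋃ Aᵢ, ⋂ Bᵢ)` be the supremum of the chain. If the separators do not
stabilise, `s` has order below the common order `k` of the chain, so every separator has a vertex
outside that of `s`, and these vertices escape every finite set. A non-principal ultrafilter `μ`
containing them defines an `ℵ₀`-profile; as `P` is bounded, some `t ∈ P` has `A(t) ∖ B(t) ∈ μ`,
so for some large `n` a separator vertex `w` of `fₙ` lies in `A(t) ∖ B(t)`. The corner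
`(s⁻¹ ∨ fₙ) ∨ t` lies above `fₙ` and its separator misses `w`, so it has order `< k`; efficiency
of `fₙ` forces its inverse into `P`, against the profile property for `s⁻¹ ∨ fₙ, t ∈ P`. -/

open Filter

namespace GraphSep

variable {V : Type} {G : SimpleGraph V}

instance : Preorder (GraphSep G) where
  le := GraphSep.le
  le_refl _ := ⟨subset_rfl, subset_rfl⟩
  le_trans _ _ _ h h' := ⟨h.1.trans h'.1, h'.2.trans h.2⟩

@[simp] lemma inv_A (s : GraphSep G) : s.inv.A = s.B := rfl
@[simp] lemma inv_B (s : GraphSep G) : s.inv.B = s.A := rfl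
@[simp] lemma join_A (s t : GraphSep G) : (s.join t).A = s.A ∪ t.A := rfl
@[simp] lemma join_B (s t : GraphSep G) : (s.join t).B = s.B ∩ t.B := rfl

lemma order_eq_encard (s : GraphSep G) : s.order = s.sepSet.encard := rfl

lemma order_inv (s : GraphSep G) : s.inv.order = s.order := by
  simp [order, inv, Set.inter_comm]

lemma B_eq_univ_of_A_subset {s : GraphSep G} (h : s.A ⊆ s.B) : s.B = Set.univ := by
  rw [← s.union_eq, Set.union_eq_right.2 h]

lemma A_eq_univ_of_inv_eq {s : GraphSep G} (h : s.inv = s) : s.A = Set.univ := by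
  rw [← s.union_eq, show s.B = s.A from congrArg GraphSep.A h, Set.union_self]

section Profiles

variable {κ κ' : ℕ∞} {P P' : Set (GraphSep G)} {s t x y : GraphSep G}

lemma IsProfile.order_lt_top (hP : IsProfile κ P) (hs : s ∈ P) : s.order < ⊤ :=
  (hP.1.1 s hs).trans_le le_top

lemma IsProfile.inv_notMem (hP : IsProfile κ P) (hreg : RegularP P) (hs : s ∈ P) :
    s.inv ∉ P :=
  fun hs' => hreg s hs (A_eq_univ_of_inv_eq (hP.1.2.2 s hs hs'))

lemma IsProfile.inv_mem_of_le (hP : IsProfile κ P) (hreg : RegularP P) (hy : y.inv ∈ P)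
    (hle : y ≤ x) (hx : x.order < κ) : x.inv ∈ P := by
  refine (hP.1.2.1 x hx).resolve_left fun hxP => ?_
  rcases hP.2.1 y.inv hy x hxP hle with h | h
  · have hxA : x.A = y.B := congrArg GraphSep.A h.symm
    exact hreg x hxP (hxA.trans (B_eq_univ_of_A_subset (hxA ▸ hle.1)))
  · exact hP.inv_notMem hreg hxP (h ▸ hy)

lemma IsProfile.join_mem (hP : IsProfile κ P) (hs : s ∈ P) (ht : t ∈ P)
    (h : (s.join t).order < κ) : s.join t ∈ P :=
  (hP.1.2.1 _ h).resolve_right (hP.2.2 s hs t ht)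

lemma Distinguishes.symm (h : Distinguishes s P P') : Distinguishes s P' P :=
  (Or.symm h).imp And.symm And.symm

lemma EffDist.symm (h : EffDist s P P') : EffDist s P' P :=
  ⟨h.1.symm, fun t ht => h.2 t ht.symm⟩

lemma Distinguishes.inv_mem_of_mem (hd : Distinguishes s P P') (hP : IsProfile κ P)
    (hreg : RegularP P) (hs : s ∈ P) : s.inv ∈ P' :=
  hd.elim And.right fun h => absurd h.1 (hP.inv_notMem hreg hs)

lemma Distinguishes.mem_of_le_of_mem (hd : Distinguishes s P P') (hP : IsProfile κ P)
    (hreg : RegularP P) (hle : s ≤ x) (hx : x ∈ P) : s ∈ P := by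
  by_contra hs
  have hsinv : s.inv ∈ P := (hd.resolve_left fun h => hs h.1).1
  exact hP.inv_notMem hreg hx (hP.inv_mem_of_le hreg hsinv hle (hP.1.1 x hx))

lemma EffDist.inv_mem_of_le (heff : EffDist x P P') (hP : IsProfile κ P)
    (hP' : IsProfile κ' P') (hreg' : RegularP P') (hx : x ∈ P) (hx' : x.inv ∈ P')
    (hle : x ≤ s) (hs : s.order < x.order) : s.inv ∈ P := by
  have hs' : s.inv ∈ P' := hP'.inv_mem_of_le hreg' hx' hle
    (hs.trans (by simpa [order_inv] using hP'.1.1 _ hx'))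
  refine (hP.1.2.1 s (hs.trans (hP.1.1 x hx))).resolve_left fun hsP => ?_
  exact (heff.2 s (Or.inl ⟨hsP, hs'⟩)).not_gt hs

end Profiles

section DirectedSup

variable {ι : Type*}

def directedSup (f : ι → GraphSep G) (hf : Directed (· ≤ ·) f) : GraphSep G where
  A := ⋃ i, (f i).A
  B := ⋂ i, (f i).B
  union_eq := by
    refine Set.eq_univ_of_forall fun v => ?_
    by_cases hv : ∀ i, v ∈ (f i).B
    · exact Or.inr (Set.mem_iInter.2 hv)
    · obtain ⟨i, hi⟩ := not_forall.1 hv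
      exact Or.inl (Set.mem_iUnion.2 ⟨i, (f i).mem_A_or_B v |>.resolve_right hi⟩)
  no_edge := by
    rintro a ⟨haA, haB⟩ b ⟨hbB, hbA⟩
    obtain ⟨i, hi⟩ := Set.mem_iUnion.1 haA
    obtain ⟨j, hj⟩ : ∃ j, a ∉ (f j).B := by simpa using haB
    obtain ⟨l, hil, hjl⟩ := hf i j
    exact (f l).no_edge a ⟨hil.1 hi, fun h => hj (hjl.2 h)⟩ b
      ⟨Set.mem_iInter.1 hbB l, fun h => hbA (Set.mem_iUnion.2 ⟨l, h⟩)⟩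

lemma le_directedSup (f : ι → GraphSep G) (hf : Directed (· ≤ ·) f) (i : ι) :
    f i ≤ directedSup f hf :=
  ⟨Set.subset_iUnion (fun i => (f i).A) i, Set.iInter_subset (fun i => (f i).B) i⟩

end DirectedSup

section Chains

variable {f : ℕ → GraphSep G} (hf : Monotone f)
include hf

lemma eventually_mem_sepSet_of_mem_directedSup {v : V}
    (hv : v ∈ (directedSup f hf.directed_le).sepSet) : ∀ᶠ n in atTop, v ∈ (f n).sepSet := by
  obtain ⟨i, hi⟩ := Set.mem_iUnion.1 hv.1
  exact eventually_atTop.2 ⟨i, fun n hn => ⟨(hf hn).1 hi, Set.mem_iInter.1 hv.2 n⟩⟩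

lemma mem_sepSet_directedSup_of_frequently {v : V} (hv : ∃ᶠ n in atTop, v ∈ (f n).sepSet) :
    v ∈ (directedSup f hf.directed_le).sepSet := by
  obtain ⟨n, hn⟩ := hv.exists
  refine ⟨Set.mem_iUnion.2 ⟨n, hn.1⟩, Set.mem_iInter.2 fun i => ?_⟩
  obtain ⟨m, him, hm⟩ := frequently_atTop.1 hv i
  exact (hf him).2 hm.2

lemma eventually_inter_B_subset_directedSup {S : Set V} (hS : S.Finite) :
    ∀ᶠ n in atTop, S ∩ (f n).B ⊆ (directedSup f hf.directed_le).B := by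
  have : ∀ v ∈ S, ∀ᶠ n in atTop, v ∈ (f n).B → v ∈ (directedSup f hf.directed_le).B := by
    intro v _
    by_cases hv : ∀ i, v ∈ (f i).B
    · exact Eventually.of_forall fun _ _ => Set.mem_iInter.2 hv
    · obtain ⟨i, hi⟩ := not_forall.1 hv
      exact eventually_atTop.2 ⟨i, fun n hn hvn => absurd ((hf hn).2 hvn) hi⟩
  exact ((eventually_all_finite hS).2 this).mono fun n hn v hv => hn v hv.1 hv.2

lemma eventually_sepSet_directedSup_subset
    (hfin : (directedSup f hf.directed_le).sepSet.Finite) :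
    ∀ᶠ n in atTop, (directedSup f hf.directed_le).sepSet ⊆ (f n).sepSet :=
  (eventually_all_finite hfin).2 fun _ hv => eventually_mem_sepSet_of_mem_directedSup hf hv

lemma order_directedSup_lt {k : ℕ∞} (hk : ∀ n, (f n).order = k) (hktop : k < ⊤)
    (hne : ¬ ∃ F, ∀ᶠ n in atTop, (f n).sepSet = F) :
    (directedSup f hf.directed_le).order < k := by
  by_contra! hle
  obtain ⟨F, hFE, hFk⟩ := Set.exists_subset_encard_eq hle
  have hF : F.Finite := Set.encard_lt_top_iff.1 (hFk ▸ hktop)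
  have hsub : ∀ᶠ n in atTop, F ⊆ (f n).sepSet := (eventually_all_finite hF).2
    fun _ hv => eventually_mem_sepSet_of_mem_directedSup hf (hFE hv)
  exact hne ⟨F, hsub.mono fun n hn =>
    (hF.eq_of_subset_of_encard_le hn (by rw [← order_eq_encard, hk n, hFk])).symm⟩

lemma exists_tendsto_cofinite_mem_sepSet_diff {k : ℕ∞} (hk : ∀ n, (f n).order = k)
    (hlt : (directedSup f hf.directed_le).order < k) :
    ∃ w : ℕ → V, Tendsto w atTop cofinite ∧
      ∀ n, w n ∈ (f n).sepSet \ (directedSup f hf.directed_le).sepSet := by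
  have hne : ∀ n, ((f n).sepSet \ (directedSup f hf.directed_le).sepSet).Nonempty := by
    intro n
    rw [Set.sdiff_nonempty]
    intro hsub
    exact lt_irrefl k (((hk n).symm.le.trans (Set.encard_mono hsub)).trans_lt hlt)
  choose w hw using hne
  refine ⟨w, le_cofinite_iff_eventually_ne.2 fun v => ?_, hw⟩
  by_contra h
  have hfreq : ∃ᶠ n in atTop, w n = v := (not_eventually.1 h).mono fun _ => not_not.1
  obtain ⟨n, hn⟩ := hfreq.exists
  exact (hw n).2 (hn ▸ mem_sepSet_directedSup_of_frequently hf
    (hfreq.mono fun m hm => hm ▸ (hw m).1))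

end Chains

section UltrafilterProfile

variable (G) in
def ultrafilterProfile (μ : Ultrafilter V) : Set (GraphSep G) :=
  {s | s.order < ⊤ ∧ s.B \ s.A ∈ μ}

variable {μ : Ultrafilter V}

lemma diff_mem_or_diff_mem (hμ : (μ : Filter V) ≤ cofinite) {s : GraphSep G}
    (hs : s.order < ⊤) :
    s.A \ s.B ∈ μ ∨ s.B \ s.A ∈ μ := by
  have hsep : s.sepSetᶜ ∈ μ := hμ (Set.encard_lt_top_iff.1 hs).compl_mem_cofinite
  refine Ultrafilter.union_mem_iff.1 (mem_of_superset hsep fun v hv => ?_)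
  rcases s.mem_A_or_B v with h | h
  · exact Or.inl ⟨h, fun h' => hv ⟨h, h'⟩⟩
  · exact Or.inr ⟨h, fun h' => hv ⟨h', h⟩⟩

lemma isProfile_ultrafilterProfile (hμ : (μ : Filter V) ≤ cofinite) :
    IsProfile ⊤ (ultrafilterProfile G μ) := by
  refine ⟨⟨fun s hs => hs.1, fun s hs => ?_, fun s hs hs' => ?_⟩, fun r hr s hs hle => ?_,
    fun s hs t ht hst => ?_⟩
  · rcases diff_mem_or_diff_mem hμ hs with h | h
    · exact Or.inr ⟨by rwa [order_inv], h⟩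
    · exact Or.inl ⟨hs, h⟩
  · obtain ⟨v, hv⟩ := Ultrafilter.nonempty_of_mem (inter_mem hs.2 hs'.2)
    exact absurd hv.2.1 hv.1.2
  · obtain ⟨v, hv⟩ := Ultrafilter.nonempty_of_mem (inter_mem hr.2 hs.2)
    exact absurd (hle.1 hv.1.1) hv.2.2
  · obtain ⟨v, hv⟩ := Ultrafilter.nonempty_of_mem (inter_mem (inter_mem hs.2 ht.2) hst.2)
    simp only [Set.mem_inter_iff, Set.mem_sdiff, inv_A, inv_B, join_A, join_B] at hv
    tauto

lemma exists_mem_diff_mem_ultrafilter {κ : ℕ∞} {P : Set (GraphSep G)} (hP : IsProfile κ P)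
    (hbdd : ∀ Q : Set (GraphSep G), IsProfile ⊤ Q → ¬ P ⊆ Q) (hμ : (μ : Filter V) ≤ cofinite) :
    ∃ t ∈ P, t.A \ t.B ∈ μ := by
  obtain ⟨t, htP, htQ⟩ := Set.not_subset.1 (hbdd _ (isProfile_ultrafilterProfile hμ))
  have ht := hP.order_lt_top htP
  exact ⟨t, htP, (diff_mem_or_diff_mem hμ ht).resolve_right fun h => htQ ⟨ht, h⟩⟩

end UltrafilterProfile

section Corners

variable {s t x : GraphSep G}

lemma sepSet_inv_join_subset (hsx : s.sepSet ⊆ x.sepSet) :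
    (s.inv.join x).sepSet ⊆ x.sepSet := by
  rintro v ⟨hvs | hvx, hvA, hvB⟩
  · exact hsx ⟨hvA, hvs⟩
  · exact ⟨hvx, hvB⟩

lemma sepSet_inv_join_join_subset {w : V} (hsx : s.sepSet ⊆ x.sepSet)
    (hts : t.sepSet ∩ x.B ⊆ s.B) (hws : w ∉ s.sepSet) (hwt : w ∉ t.B) :
    ((s.inv.join x).join t).sepSet ⊆ x.sepSet \ {w} := by
  rintro v ⟨(hvs | hvx) | hvt, ⟨hvA, hvB⟩, hvtB⟩
  · exact ⟨hsx ⟨hvA, hvs⟩, fun h => hws (h ▸ ⟨hvA, hvs⟩)⟩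
  · exact ⟨⟨hvx, hvB⟩, fun h => hwt (h ▸ hvtB)⟩
  · have hv : v ∈ s.sepSet := ⟨hvA, hts ⟨⟨hvt, hvtB⟩, hvB⟩⟩
    exact ⟨hsx hv, fun h => hws (h ▸ hv)⟩

lemma EffDist.sepSet_diff_subset_B {κ κ' : ℕ∞} {P P' : Set (GraphSep G)}
    (heff : EffDist x P P') (hP : IsProfile κ P) (hP' : IsProfile κ' P') (hreg' : RegularP P')
    (hx : x ∈ P) (hx' : x.inv ∈ P') (hxs : x ≤ s) (hs : s.order < x.order)
    (hsx : s.sepSet ⊆ x.sepSet) (ht : t ∈ P) (hts : t.sepSet ∩ x.B ⊆ s.B) :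
    x.sepSet \ s.sepSet ⊆ t.B := by
  intro w hw
  by_contra hwt
  have hxfin : x.sepSet.Finite := Set.encard_lt_top_iff.1 (hP.order_lt_top hx)
  have hc : s.inv.join x ∈ P :=
    hP.join_mem (heff.inv_mem_of_le hP hP' hreg' hx hx' hxs hs) hx
      ((Set.encard_mono (sepSet_inv_join_subset hsx)).trans_lt (hP.1.1 x hx))
  have hcorner : ((s.inv.join x).join t).order < x.order :=
    (Set.encard_mono (sepSet_inv_join_join_subset hsx hts hw.2 hwt)).trans_lt
      ((hxfin.subset Set.sdiff_subset).encard_lt_encard (Set.sdiff_singleton_ssubset.2 hw.1))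
  have hle : x ≤ (s.inv.join x).join t := ⟨fun v hv => Or.inl (Or.inr hv), fun v hv => hv.1.2⟩
  exact hP.2.2 _ hc t ht (heff.inv_mem_of_le hP hP' hreg' hx hx' hle hcorner)

end Corners

theorem exists_eventually_sepSet_eq {κ κ' : ℕ∞} {P P' : Set (GraphSep G)}
    (hP : IsProfile κ P) (hP' : IsProfile κ' P')
    (hbdd : ∀ Q : Set (GraphSep G), IsProfile ⊤ Q → ¬ P ⊆ Q) (hreg' : RegularP P')
    {f : ℕ → GraphSep G} (hf : Monotone f) (heff : ∀ n, EffDist (f n) P P')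
    (hfP : ∀ᶠ n in atTop, f n ∈ P ∧ (f n).inv ∈ P') :
    ∃ F, ∀ᶠ n in atTop, (f n).sepSet = F := by
  by_contra hne
  set s := directedSup f hf.directed_le
  obtain ⟨n₀, hn₀⟩ := hfP.exists
  have hk : ∀ n, (f n).order = (f n₀).order := fun n =>
    le_antisymm ((heff n).2 _ (heff n₀).1) ((heff n₀).2 _ (heff n).1)
  have hs : s.order < (f n₀).order := order_directedSup_lt hf hk (hP.order_lt_top hn₀.1) hne
  have hsfin : s.sepSet.Finite := Set.encard_lt_top_iff.1 (hs.trans_le le_top)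
  obtain ⟨w, hw_tendsto, hw⟩ := exists_tendsto_cofinite_mem_sepSet_diff hf hk hs
  set μ := Ultrafilter.of (Filter.map w atTop)
  obtain ⟨t, htP, htμ⟩ :=
    exists_mem_diff_mem_ultrafilter hP hbdd ((Ultrafilter.of_le _).trans hw_tendsto)
  have hwt : ∃ᶠ n in atTop, w n ∈ t.A \ t.B := by
    have htμ' : ∀ᶠ v in (μ : Filter V), v ∈ t.A \ t.B := htμ
    exact frequently_map.1 (htμ'.frequently.filter_mono (Ultrafilter.of_le _))
  have htfin : t.sepSet.Finite := Set.encard_lt_top_iff.1 (hP.order_lt_top htP)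
  obtain ⟨n, hwn, ⟨hnP, hnP'⟩, hts, hsx⟩ := (hwt.and_eventually (hfP.and
    ((eventually_inter_B_subset_directedSup hf htfin).and
      (eventually_sepSet_directedSup_subset hf hsfin)))).exists
  exact hwn.2 ((heff n).sepSet_diff_subset_B hP hP' hreg' hnP hnP' (le_directedSup _ _ n)
    (hk n ▸ hs) hsx htP hts (hw n))

end GraphSep

open GraphSep in
theorem stmt8_general {V : Type} (G : SimpleGraph V)
    (P P' : Set (GraphSep G))
    (hreg : RegularP P) (hreg' : RegularP P')
    (hbdd : BoundedP P) (hbdd' : BoundedP P')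
    (f : ℕ → GraphSep G)
    (heff : ∀ i, EffDist (f i) P P')
    (hmono : ∀ i, (f i).le (f (i + 1))) :
    ∃ n : ℕ, ∀ m, n ≤ m → (f m).A ∩ (f m).B = (f n).A ∩ (f n).B := by
  obtain ⟨⟨k, hP⟩, hPbdd⟩ := hbdd
  obtain ⟨⟨k', hP'⟩, hP'bdd⟩ := hbdd'
  have hf : Monotone f := monotone_nat_of_le_succ hmono
  suffices ∃ F, ∀ᶠ n in atTop, (f n).sepSet = F by
    obtain ⟨F, hF⟩ := this
    obtain ⟨n, hn⟩ := eventually_atTop.1 hF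
    exact ⟨n, fun m hm => (hn m hm).trans (hn n le_rfl).symm⟩
  by_cases hall : ∀ n, f n ∈ P
  · exact exists_eventually_sepSet_eq hP hP' hPbdd hreg' hf heff
      (Eventually.of_forall fun n => ⟨hall n, (heff n).1.inv_mem_of_mem hP hreg (hall n)⟩)
  · obtain ⟨n₀, hn₀⟩ := not_forall.1 hall
    refine exists_eventually_sepSet_eq hP' hP hP'bdd hreg hf (fun n => (heff n).symm)
      (eventually_atTop.2 ⟨n₀, fun n hn => ?_⟩)
    have hnP : f n ∉ P := fun h => hn₀ ((heff n₀).1.mem_of_le_of_mem hP hreg (hf hn) h)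
    exact ((heff n).1.resolve_left fun h => hnP h.1).symm

open GraphSep in
/-- for distinguishable regular bounded profiles, the separators of any
increasing chain of efficient distinguishers are eventually constant. -/
theorem stmt8 {V : Type} (G : SimpleGraph V) (hG : G.Connected)
    (P P' : Set (GraphSep G))
    (hP : IsProfileIn G P) (hP' : IsProfileIn G P')
    (hreg : RegularP P) (hreg' : RegularP P')
    (hbdd : BoundedP P) (hbdd' : BoundedP P')
    (hdist : Distinguishable P P')
    (f : ℕ → GraphSep G)
    (heff : ∀ i, EffDist (f i) P P')
    (hmono : ∀ i, (f i).le (f (i + 1))) :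
    ∃ n : ℕ, ∀ m, n ≤ m → (f m).A ∩ (f m).B = (f n).A ∩ (f n).B :=
  stmt8_general G P P' hreg hreg' hbdd hbdd' f heff hmono
end

section
/- Let G be a connected graph and (A,B), (A',B') two tight separations of G of finite order. Then either (A',B') is nested with (A,B), or the separator A'∩B' is a ⊆-minimal x–y-separator in G for some pair of vertices x,y from (A∩B) ∪ N(A∩B). -/
/-!
Let `X` be the separator of `s` and `S` that of `s'`, and let `C₁ ⊆ A' ∖ B'`, `C₂ ⊆ B' ∖ A'` be
tight components of `G − S`. If both meet `X ∪ N(X)`, then `S` is a minimal separator between a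
vertex of `C₁` and one of `C₂`, as every vertex of `S` has a neighbour in both.

Otherwise some `Cᵢ` avoids `X ∪ N(X)`; being connected in `G − X`, it lies on one side of `s`, say
in `A ∖ B`, and then so does `S = N(Cᵢ)`. Now take the tight component `D ⊆ B ∖ A` of `s`: it
avoids `S`, so it lies on one side of `s'`, and with it its neighbourhood `X`. Every vertex of
`B ∖ A` reaches `X` inside `B`, hence without meeting `S`, so all of `B` lies on that side of `s'`,
which makes `s'` (or its inverse) at most `s`.
-/

namespace GraphSep

variable {V : Type} {G : SimpleGraph V} {X Y C : Set V} {u v w : V}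

lemma avoidReach_refl (hv : v ∉ X) : AvoidReach G X v v :=
  ⟨.nil, fun u hu => by obtain rfl := List.mem_singleton.mp hu; exact hv⟩

lemma avoidReach_of_adj (hv : v ∉ X) (hw : w ∉ X) (h : G.Adj v w) : AvoidReach G X v w :=
  ⟨.cons h .nil, fun u hu => by
    simp only [SimpleGraph.Walk.support_cons, SimpleGraph.Walk.support_nil, List.mem_cons,
      List.not_mem_nil, or_false] at hu
    rcases hu with rfl | rfl <;> assumption⟩

lemma AvoidReach.left_notMem (h : AvoidReach G X v w) : v ∉ X :=
  let ⟨p, hp⟩ := h; hp v p.start_mem_support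

lemma AvoidReach.symm (h : AvoidReach G X v w) : AvoidReach G X w v :=
  let ⟨p, hp⟩ := h
  ⟨p.reverse, fun u hu => hp u (by rwa [p.support_reverse, List.mem_reverse] at hu)⟩

lemma AvoidReach.trans (h₁ : AvoidReach G X u v) (h₂ : AvoidReach G X v w) :
    AvoidReach G X u w :=
  let ⟨p, hp⟩ := h₁
  let ⟨q, hq⟩ := h₂
  ⟨p.append q, fun x hx => (p.mem_support_append_iff q).mp hx |>.elim (hp x) (hq x)⟩

lemma AvoidReach.mono (hYX : Y ⊆ X) (h : AvoidReach G X v w) : AvoidReach G Y v w :=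
  let ⟨p, hp⟩ := h
  ⟨p, fun u hu huY => hp u hu (hYX huY)⟩

lemma avoidReach_of_mem_support {p : G.Walk v w} (hp : ∀ x ∈ p.support, x ∉ X)
    (hu : u ∈ p.support) : AvoidReach G X v u := by
  classical
  exact ⟨p.takeUntil u hu, fun x hx => hp x (p.support_takeUntil_subset_support hu hx)⟩

lemma separatesIn_iff {x y : V} {S : Set V} :
    SeparatesIn G x y S ↔ x ∉ S ∧ y ∉ S ∧ ¬ AvoidReach G S x y := by
  simp only [SeparatesIn, AvoidReach, not_exists, not_forall, not_not, exists_prop]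

namespace IsCompOf

lemma nonempty (hC : IsCompOf G X C) : C.Nonempty :=
  let ⟨v, hv, hC⟩ := hC
  ⟨v, hC ▸ avoidReach_refl hv⟩

lemma avoidReach (hC : IsCompOf G X C) (hv : v ∈ C) (hw : w ∈ C) : AvoidReach G X v w := by
  obtain ⟨c, -, rfl⟩ := hC
  exact (AvoidReach.symm hv).trans hw

lemma notMem (hC : IsCompOf G X C) (hv : v ∈ C) : v ∉ X :=
  (hC.avoidReach hv hv).left_notMem

lemma mem_of_avoidReach (hC : IsCompOf G X C) (hv : v ∈ C) (h : AvoidReach G X v w) :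
    w ∈ C := by
  obtain ⟨c, -, rfl⟩ := hC
  exact AvoidReach.trans hv h

lemma avoidReach_of_disjoint (hC : IsCompOf G X C) (hCY : Disjoint C Y) (hv : v ∈ C)
    (hw : w ∈ C) : AvoidReach G Y v w := by
  obtain ⟨p, hp⟩ := hC.avoidReach hv hw
  exact ⟨p, fun u hu => hCY.notMem_of_mem_left
    (hC.mem_of_avoidReach hv (avoidReach_of_mem_support hp hu))⟩

end IsCompOf

lemma minSeparator_of_isCompOf {C₁ C₂ : Set V} {x y : V}
    (hC₁ : IsCompOf G X C₁) (hN₁ : nbhd G C₁ = X) (hC₂ : IsCompOf G X C₂) (hN₂ : nbhd G C₂ = X)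
    (hx : x ∈ C₁) (hy : y ∈ C₂) (hyC₁ : y ∉ C₁) : MinSeparator G x y X := by
  refine ⟨separatesIn_iff.mpr ⟨hC₁.notMem hx, hC₂.notMem hy,
    fun h => hyC₁ (hC₁.mem_of_avoidReach hx h)⟩, fun S hSX hS => ?_⟩
  refine hSX.antisymm fun u huX => by_contra fun huS => ?_
  obtain ⟨-, c₁, hc₁, hu₁⟩ := hN₁.symm ▸ huX
  obtain ⟨-, c₂, hc₂, hu₂⟩ := hN₂.symm ▸ huX
  have hc₁S : c₁ ∉ S := fun h => hC₁.notMem hc₁ (hSX h)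
  have hc₂S : c₂ ∉ S := fun h => hC₂.notMem hc₂ (hSX h)
  have hxy : AvoidReach G S x y :=
    (((hC₁.avoidReach hx hc₁).mono hSX).trans (avoidReach_of_adj hc₁S huS hu₁.symm)).trans
      ((avoidReach_of_adj huS hc₂S hu₂).trans ((hC₂.avoidReach hc₂ hy).mono hSX))
  exact (separatesIn_iff.mp hS).2.2 hxy

variable {s t : GraphSep G}

lemma sepSet_inv (s : GraphSep G) : s.inv.sepSet = s.sepSet :=
  Set.inter_comm _ _

lemma IsTight.inv (hs : IsTight s) : IsTight s.inv := by
  rw [IsTight, sepSet_inv]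
  exact hs.symm

lemma Nested.of_inv_right (h : Nested t s.inv) : Nested t s := by
  rcases h with h | h | h | h
  exacts [Or.inr (Or.inl h), Or.inl h, Or.inr (Or.inr (Or.inr h)), Or.inr (Or.inr (Or.inl h))]

lemma mem_diff_or_mem_diff (s : GraphSep G) (hv : v ∉ s.sepSet) :
    v ∈ s.A \ s.B ∨ v ∈ s.B \ s.A := by
  rcases s.mem_A_or_B v with h | h
  · exact Or.inl ⟨h, fun hB => hv ⟨h, hB⟩⟩
  · exact Or.inr ⟨h, fun hA => hv ⟨hA, h⟩⟩

lemma AvoidReach.mem_diff (h : AvoidReach G s.sepSet v w) (hv : v ∈ s.A \ s.B) :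
    w ∈ s.A \ s.B := by
  obtain ⟨p, hp⟩ := h
  induction p with
  | nil => exact hv
  | @cons a b c hab q ih =>
    refine ih ?_ fun x hx => hp x (List.mem_cons_of_mem _ hx)
    exact (s.mem_diff_or_mem_diff (hp b (List.mem_cons_of_mem _ q.start_mem_support))).resolve_right
      fun hb => s.no_edge a hv b hb hab

lemma IsCompOf.subset_diff (hC : IsCompOf G X C) (hCs : Disjoint C s.sepSet) (hv : v ∈ C)
    (hvs : v ∈ s.A \ s.B) : C ⊆ s.A \ s.B :=
  fun _ hw => (hC.avoidReach_of_disjoint hCs hv hw).mem_diff hvs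

lemma nbhd_subset_diff (hC : C ⊆ s.A \ s.B) (hN : Disjoint (nbhd G C) s.sepSet) :
    nbhd G C ⊆ s.A \ s.B := by
  intro u hu
  obtain ⟨c, hc, hadj⟩ := hu.2
  exact (s.mem_diff_or_mem_diff (hN.notMem_of_mem_left hu)).resolve_right
    fun hus => s.no_edge c (hC hc) u hus hadj.symm

lemma exists_walk_to_sepSet (p : G.Walk v w) (hv : v ∈ s.B) (hw : w ∈ s.A \ s.B) :
    ∃ x ∈ s.sepSet, ∃ q : G.Walk v x, ∀ u ∈ q.support, u ∈ s.B := by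
  induction p with
  | nil => exact absurd hv hw.2
  | @cons a b c hab p ih =>
    by_cases ha : a ∈ s.A
    · exact ⟨a, ⟨ha, hv⟩, .nil, fun u hu => by obtain rfl := List.mem_singleton.mp hu; exact hv⟩
    have hb : b ∈ s.B := by
      by_contra hbB
      exact s.no_edge b ⟨(s.mem_A_or_B b).resolve_right hbB, hbB⟩ a ⟨hv, ha⟩ hab.symm
    obtain ⟨x, hx, q, hq⟩ := ih hb hw
    refine ⟨x, hx, .cons hab q, fun u hu => ?_⟩
    rcases List.mem_cons.mp hu with rfl | hu
    exacts [hv, hq u hu]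

lemma le_of_sepSet_subset_diff (hG : G.Connected) (ha : (s.A \ s.B).Nonempty)
    (hts : t.sepSet ⊆ s.A \ s.B) (hst : s.sepSet ⊆ t.B \ t.A) : t.le s := by
  have hB : s.B ⊆ t.B \ t.A := by
    intro b hb
    by_cases hbA : b ∈ s.A
    · exact hst ⟨hbA, hb⟩
    obtain ⟨a, ha⟩ := ha
    obtain ⟨p⟩ := hG.preconnected b a
    obtain ⟨x, hx, q, hq⟩ := exists_walk_to_sepSet p hb ha
    have hbx : AvoidReach G t.inv.sepSet b x :=
      ⟨q, fun u hu hut => (hts (t.sepSet_inv ▸ hut)).2 (hq u hu)⟩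
    exact hbx.symm.mem_diff (hst hx)
  exact ⟨fun a ha => (s.mem_A_or_B a).resolve_right fun hb => (hB hb).2 ha, fun b hb => (hB hb).1⟩

lemma nested_of_sepSet_subset (hG : G.Connected) (hs : IsTight s)
    (hts : t.sepSet ⊆ s.A \ s.B) : Nested t s := by
  obtain ⟨⟨C, hC, -, hCs⟩, ⟨D, hD, hDN, hDs⟩⟩ := hs
  have ha : (s.A \ s.B).Nonempty := hC.nonempty.mono hCs
  have hDt : Disjoint D t.sepSet :=
    Set.disjoint_left.mpr fun d hd hdt => (hts hdt).2 (hDs hd).1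
  have hXt : Disjoint (nbhd G D) t.sepSet :=
    hDN ▸ Set.disjoint_left.mpr fun x hx hxt => (hts hxt).2 hx.2
  obtain ⟨d, hd⟩ := hD.nonempty
  rcases t.mem_diff_or_mem_diff (hDt.notMem_of_mem_left hd) with hdt | hdt
  · have hX : s.sepSet ⊆ t.inv.B \ t.inv.A :=
      hDN ▸ nbhd_subset_diff (hD.subset_diff hDt hd hdt) hXt
    rw [← t.sepSet_inv] at hts
    exact Or.inr (Or.inr (Or.inl (le_of_sepSet_subset_diff hG ha hts hX)))
  · rw [← t.sepSet_inv] at hDt hXt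
    have hX : s.sepSet ⊆ t.B \ t.A :=
      hDN ▸ nbhd_subset_diff (hD.subset_diff hDt hd hdt) hXt
    exact Or.inl (le_of_sepSet_subset_diff hG ha hts hX)

lemma sepSet_subset_of_disjoint_closedNbhd (hC : IsCompOf G t.sepSet C)
    (hCN : nbhd G C = t.sepSet) (hCs : Disjoint C (s.sepSet ∪ nbhd G s.sepSet)) (hv : v ∈ C)
    (hvs : v ∈ s.A \ s.B) : t.sepSet ⊆ s.A \ s.B := by
  have hCX : Disjoint C s.sepSet := hCs.mono_right Set.subset_union_left
  have hNX : Disjoint (nbhd G C) s.sepSet := Set.disjoint_left.mpr fun u hu huX => by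
    obtain ⟨c, hc, huc⟩ := hu.2
    exact hCs.notMem_of_mem_left hc (Or.inr ⟨hCX.notMem_of_mem_left hc, u, huX, huc.symm⟩)
  exact hCN ▸ nbhd_subset_diff (hC.subset_diff hCX hv hvs) hNX

lemma nested_of_disjoint_closedNbhd (hG : G.Connected) (hs : IsTight s)
    (hC : IsCompOf G t.sepSet C) (hCN : nbhd G C = t.sepSet)
    (hCs : Disjoint C (s.sepSet ∪ nbhd G s.sepSet)) : Nested t s := by
  obtain ⟨v, hv⟩ := hC.nonempty
  rcases s.mem_diff_or_mem_diff fun h => hCs.notMem_of_mem_left hv (Or.inl h) with hvs | hvs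
  · exact nested_of_sepSet_subset hG hs (sepSet_subset_of_disjoint_closedNbhd hC hCN hCs hv hvs)
  · rw [← s.sepSet_inv] at hCs
    exact (nested_of_sepSet_subset hG hs.inv
      (sepSet_subset_of_disjoint_closedNbhd hC hCN hCs hv hvs)).of_inv_right

end GraphSep

open GraphSep in
theorem stmt15_general {V : Type} (G : SimpleGraph V) (hG : G.Connected)
    (s s' : GraphSep G)
    (hs : IsTight s) (hs' : IsTight s') :
    Nested s' s ∨
      ∃ x ∈ s.sepSet ∪ nbhd G s.sepSet, ∃ y ∈ s.sepSet ∪ nbhd G s.sepSet,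
        MinSeparator G x y s'.sepSet := by
  obtain ⟨⟨C₁, hC₁, hN₁, hC₁s⟩, ⟨C₂, hC₂, hN₂, hC₂s⟩⟩ := hs'
  by_cases h₁ : Disjoint C₁ (s.sepSet ∪ nbhd G s.sepSet)
  · exact Or.inl (nested_of_disjoint_closedNbhd hG hs hC₁ hN₁ h₁)
  by_cases h₂ : Disjoint C₂ (s.sepSet ∪ nbhd G s.sepSet)
  · exact Or.inl (nested_of_disjoint_closedNbhd hG hs hC₂ hN₂ h₂)
  obtain ⟨x, hxC, hx⟩ := Set.not_disjoint_iff.mp h₁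
  obtain ⟨y, hyC, hy⟩ := Set.not_disjoint_iff.mp h₂
  exact Or.inr ⟨x, hx, y, hy, minSeparator_of_isCompOf hC₁ hN₁ hC₂ hN₂ hxC hyC
    fun h => (hC₂s hyC).2 (hC₁s h).1⟩

open GraphSep in
/-- two tight finite-order separations of a connected graph are nested,
or the separator of the second is a minimal `x`–`y`-separator for vertices `x,y` in
the closed neighbourhood of the separator of the first. -/
theorem stmt15 {V : Type} (G : SimpleGraph V) (hG : G.Connected)
    (s s' : GraphSep G)
    (hs : IsTight s) (hs' : IsTight s')
    (hfin : s.order < ⊤) (hfin' : s'.order < ⊤) :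
    Nested s' s ∨
      ∃ x ∈ s.sepSet ∪ nbhd G s.sepSet, ∃ y ∈ s.sepSet ∪ nbhd G s.sepSet,
        MinSeparator G x y s'.sepSet :=
  stmt15_general G hG s s' hs hs'
end
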